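/- Let k be a field and R ⊆ k[x,y] the k-subalgebra generated by the monomials x·y^m for all m ≥ 0. Then the induced map on prime spectra Spec k[x,y] → Spec R (given by contraction of prime ideals along the inclusion R ⊆ k[x,y]) is surjective and is a closed map: the image of every Zariski-closed subset of Spec k[x,y] is Zariski-closed in Spec R. -/
import Mathlib


open MvPolynomial

/-- The subalgebra `R = k[x, xy, xy², …] ⊆ k[x,y]` generated by the monomials `x·yᵐ`. -/
noncomputable def Rxy (k : Type*) [Field k] : Subalgebra k (MvPolynomial (Fin 2) k) :=
  Algebra.adjoin k {p | ∃ m : ℕ, p = X 0 * X 1 ^ m}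

section aux

variable {k : Type*} [Field k]

lemma Rxy.gen_mem (m : ℕ) : (X 0 * X 1 ^ m : MvPolynomial (Fin 2) k) ∈ Rxy k :=
  Algebra.subset_adjoin ⟨m, rfl⟩

lemma Rxy.x_mem : (X 0 : MvPolynomial (Fin 2) k) ∈ Rxy k := by
  simpa using Rxy.gen_mem (k := k) 0

lemma Rxy.xpow_mul_mem (f : MvPolynomial (Fin 2) k) :
    ∀ m : ℕ, X 0 * X 1 ^ m * f ∈ Rxy k := by
  induction f using MvPolynomial.induction_on with
  | C a =>
      intro m
      have h1 := (Rxy k).smul_mem (Rxy.gen_mem m) a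
      have e : (a • (X 0 * X 1 ^ m) : MvPolynomial (Fin 2) k) = X 0 * X 1 ^ m * C a := by
        rw [MvPolynomial.smul_eq_C_mul]; ring
      rwa [e] at h1
  | add p q hp hq =>
      intro m
      have := add_mem (hp m) (hq m)
      rwa [← mul_add] at this
  | mul_X p i hp =>
      intro m
      fin_cases i
      · have h2 := mul_mem (hp m) (Rxy.x_mem (k := k))
        have e : X 0 * X 1 ^ m * p * X 0 = X 0 * X 1 ^ m * (p * X (0 : Fin 2)) := by ring
        rwa [e] at h2
      · have h2 := hp (m + 1)
        have e : X 0 * X 1 ^ (m + 1) * p = X 0 * X 1 ^ m * (p * X (1 : Fin 2)) := by ring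
        rwa [e] at h2

lemma Rxy.x_mul_mem (f : MvPolynomial (Fin 2) k) : X 0 * f ∈ Rxy k := by
  simpa using Rxy.xpow_mul_mem f 0

lemma Rxy.decomp {f : MvPolynomial (Fin 2) k} (hf : f ∈ Rxy k) :
    ∃ (a : k) (g : MvPolynomial (Fin 2) k), f = C a + X 0 * g := by
  induction hf using Algebra.adjoin_induction with
  | mem p hp =>
      obtain ⟨m, rfl⟩ := hp
      exact ⟨0, X 1 ^ m, by simp⟩
  | algebraMap a =>
      exact ⟨a, 0, by simp [MvPolynomial.algebraMap_eq]⟩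
  | add p q hpm hqm hp hq =>
      obtain ⟨a, g, rfl⟩ := hp
      obtain ⟨b, h, rfl⟩ := hq
      exact ⟨a + b, g + h, by rw [map_add]; ring⟩
  | mul p q hpm hqm hp hq =>
      obtain ⟨a, g, rfl⟩ := hp
      obtain ⟨b, h, rfl⟩ := hq
      exact ⟨a * b, C a * h + C b * g + X 0 * g * h, by rw [map_mul]; ring⟩

/-- The element `x` of the subalgebra. -/
noncomputable def Rxy.x : Rxy k := ⟨X 0, Rxy.x_mem⟩

/-- `x·f` as an element of the subalgebra. -/
noncomputable def Rxy.xmul (f : MvPolynomial (Fin 2) k) : Rxy k :=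
  ⟨X 0 * f, Rxy.x_mul_mem f⟩

lemma Rxy.xmul_coe (f : MvPolynomial (Fin 2) k) :
    ((Rxy.xmul f : Rxy k) : MvPolynomial (Fin 2) k) = X 0 * f := rfl


lemma Rxy.case_x_notmem (I : Ideal (MvPolynomial (Fin 2) k)) (p : PrimeSpectrum (Rxy k))
    (hle : I.comap (Rxy k).val.toRingHom ≤ p.asIdeal) (hx : Rxy.x ∉ p.asIdeal) :
    ∃ q : PrimeSpectrum (MvPolynomial (Fin 2) k),
      I ≤ q.asIdeal ∧ q.asIdeal.comap (Rxy k).val.toRingHom = p.asIdeal := by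
  have hP : p.asIdeal.IsPrime := p.2
  have hmul : ∀ f g : MvPolynomial (Fin 2) k,
      Rxy.x * Rxy.xmul (f * g) = Rxy.xmul f * Rxy.xmul g := by
    intro f g
    apply Subtype.ext
    show (X 0 : MvPolynomial (Fin 2) k) * (X 0 * (f * g)) = (X 0 * f) * (X 0 * g)
    ring
  have hcancel : ∀ r : Rxy k, Rxy.x * r ∈ p.asIdeal → r ∈ p.asIdeal := fun r hr =>
    (hP.mem_or_mem hr).resolve_left hx
  let q : Ideal (MvPolynomial (Fin 2) k) :=
    { carrier := {f | Rxy.xmul f ∈ p.asIdeal}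
      zero_mem' := by
        have h0 : Rxy.xmul (0 : MvPolynomial (Fin 2) k) = 0 := Subtype.ext (by simp [Rxy.xmul])
        simp only [Set.mem_setOf_eq, h0]
        exact zero_mem _
      add_mem' := by
        intro a b ha hb
        have h0 : Rxy.xmul (a + b) = Rxy.xmul a + Rxy.xmul b :=
          Subtype.ext (by simp [Rxy.xmul, mul_add])
        simp only [Set.mem_setOf_eq, h0]
        exact add_mem ha hb
      smul_mem' := by
        intro c f hf
        simp only [Set.mem_setOf_eq, smul_eq_mul] at hf ⊢
        apply hcancel
        rw [hmul]
        exact Ideal.mul_mem_left _ _ hf }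
  have hq_mem : ∀ f, f ∈ q ↔ Rxy.xmul f ∈ p.asIdeal := fun _ => Iff.rfl
  have hxm : ∀ r : Rxy k, Rxy.xmul (r : MvPolynomial (Fin 2) k) = Rxy.x * r := by
    intro r
    apply Subtype.ext
    rfl
  have hq_prime : q.IsPrime := by
    constructor
    · intro htop
      have h1 : (1 : MvPolynomial (Fin 2) k) ∈ q := htop ▸ Submodule.mem_top
      have h2 : Rxy.xmul (1 : MvPolynomial (Fin 2) k) = Rxy.x := Subtype.ext (by simp [Rxy.xmul, Rxy.x])
      exact hx (h2 ▸ (hq_mem 1).mp h1)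
    · intro f g hfg
      have h1 : Rxy.x * Rxy.xmul (f * g) ∈ p.asIdeal :=
        Ideal.mul_mem_left _ _ ((hq_mem (f * g)).mp hfg)
      rw [hmul] at h1
      exact (hP.mem_or_mem h1).imp (fun h => (hq_mem f).mpr h) (fun h => (hq_mem g).mpr h)
  refine ⟨⟨q, hq_prime⟩, ?_, ?_⟩
  · intro f hf
    refine (hq_mem f).mpr (hle ?_)
    show X 0 * f ∈ I
    exact Ideal.mul_mem_left _ _ hf
  · ext r
    show Rxy.xmul (r : MvPolynomial (Fin 2) k) ∈ p.asIdeal ↔ r ∈ p.asIdeal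
    rw [hxm r]
    exact ⟨hcancel r, fun h => Ideal.mul_mem_left _ _ h⟩

lemma Rxy.C_mem (a : k) : (C a : MvPolynomial (Fin 2) k) ∈ Rxy k := by
  rw [← MvPolynomial.algebraMap_eq]
  exact Subalgebra.algebraMap_mem _ a

lemma Rxy.case_x_mem (I : Ideal (MvPolynomial (Fin 2) k)) (p : PrimeSpectrum (Rxy k))
    (hle : I.comap (Rxy k).val.toRingHom ≤ p.asIdeal) (hx : Rxy.x ∈ p.asIdeal) :
    ∃ q : PrimeSpectrum (MvPolynomial (Fin 2) k),
      I ≤ q.asIdeal ∧ q.asIdeal.comap (Rxy k).val.toRingHom = p.asIdeal := by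
  have hP : p.asIdeal.IsPrime := p.2
  set m : Ideal (Rxy k) :=
    (Ideal.span {(X 0 : MvPolynomial (Fin 2) k)}).comap (Rxy k).val.toRingHom with hm
  have hmp : m ≤ p.asIdeal := by
    rintro ⟨f, hf⟩ hmem
    obtain ⟨g, hg0⟩ := Ideal.mem_span_singleton.mp hmem
    have hg : f = X 0 * g := hg0
    have hsq : (⟨f, hf⟩ : Rxy k) * ⟨f, hf⟩ = Rxy.x * Rxy.xmul (g * g) := by
      apply Subtype.ext
      show f * f = X 0 * (X 0 * (g * g))
      rw [hg]; ring
    have hmem2 : (⟨f, hf⟩ : Rxy k) * ⟨f, hf⟩ ∈ p.asIdeal := by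
      rw [hsq]; exact Ideal.mul_mem_right _ _ hx
    exact (hP.mem_or_mem hmem2).elim id id
  have hpm : p.asIdeal ≤ m := by
    rintro ⟨f, hf⟩ hmem
    obtain ⟨a, g, hg⟩ := Rxy.decomp hf
    by_cases ha : a = 0
    · show f ∈ Ideal.span {(X 0 : MvPolynomial (Fin 2) k)}
      rw [hg, ha, C_0, zero_add]
      exact Ideal.mem_span_singleton.mpr ⟨g, rfl⟩
    · exfalso
      have hXg : (⟨X 0 * g, Rxy.x_mul_mem g⟩ : Rxy k) ∈ p.asIdeal := hmp (by
        show X 0 * g ∈ Ideal.span {(X 0 : MvPolynomial (Fin 2) k)}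
        exact Ideal.mem_span_singleton.mpr ⟨g, rfl⟩)
      have hCa : (⟨C a, Rxy.C_mem a⟩ : Rxy k) ∈ p.asIdeal := by
        have heq : (⟨C a, Rxy.C_mem a⟩ : Rxy k) =
            ⟨f, hf⟩ - ⟨X 0 * g, Rxy.x_mul_mem g⟩ := by
          apply Subtype.ext
          show C a = f - X 0 * g
          rw [hg]; ring
        rw [heq]
        exact sub_mem hmem hXg
      have hone : (1 : Rxy k) ∈ p.asIdeal := by
        have heq : (⟨C a, Rxy.C_mem a⟩ : Rxy k) * ⟨C a⁻¹, Rxy.C_mem a⁻¹⟩ = 1 := by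
          apply Subtype.ext
          show (C a : MvPolynomial (Fin 2) k) * C a⁻¹ = 1
          rw [← C_mul, mul_inv_cancel₀ ha, C_1]
        rw [← heq]
        exact Ideal.mul_mem_right _ _ hCa
      exact hP.ne_top ((Ideal.eq_top_iff_one _).mpr hone)
  have peq : p.asIdeal = m := le_antisymm hpm hmp
  have hne : I ⊔ Ideal.span {(X 0 : MvPolynomial (Fin 2) k)} ≠ ⊤ := by
    intro htop
    have h1 : (1 : MvPolynomial (Fin 2) k) ∈ I ⊔ Ideal.span {(X 0 : MvPolynomial (Fin 2) k)} :=
      htop ▸ Submodule.mem_top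
    obtain ⟨f, hfI, s, hs, hfs⟩ := Submodule.mem_sup.mp h1
    obtain ⟨g, rfl⟩ := Ideal.mem_span_singleton.mp hs
    have hfR : f ∈ Rxy k := by
      have heq : f = 1 - X 0 * g := by linear_combination hfs
      rw [heq]; exact sub_mem (one_mem _) (Rxy.x_mul_mem g)
    have hfp : (⟨f, hfR⟩ : Rxy k) ∈ p.asIdeal := hle hfI
    have hfm : f ∈ Ideal.span {(X 0 : MvPolynomial (Fin 2) k)} := hpm hfp
    obtain ⟨h, hh⟩ := Ideal.mem_span_singleton.mp hfm
    have heq1 : (1 : MvPolynomial (Fin 2) k) = X 0 * (h + g) := by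
      rw [← hfs, hh]; ring
    have heq2 := congrArg MvPolynomial.constantCoeff heq1
    simp [MvPolynomial.constantCoeff_X] at heq2
  obtain ⟨M, hMmax, hMle⟩ := Ideal.exists_le_maximal _ hne
  refine ⟨⟨M, hMmax.isPrime⟩, le_trans le_sup_left hMle, ?_⟩
  rw [peq]
  apply le_antisymm
  · rintro ⟨f, hf⟩ hmem
    have hfM : f ∈ M := hmem
    obtain ⟨a, g, hg⟩ := Rxy.decomp hf
    have hXgM : X 0 * g ∈ M :=
      hMle (Submodule.mem_sup_right (Ideal.mem_span_singleton.mpr ⟨g, rfl⟩))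
    by_cases ha : a = 0
    · show f ∈ Ideal.span {(X 0 : MvPolynomial (Fin 2) k)}
      rw [hg, ha, C_0, zero_add]
      exact Ideal.mem_span_singleton.mpr ⟨g, rfl⟩
    · exfalso
      have hCaM : (C a : MvPolynomial (Fin 2) k) ∈ M := by
        have heq : (C a : MvPolynomial (Fin 2) k) = f - X 0 * g := by rw [hg]; ring
        rw [heq]; exact sub_mem hfM hXgM
      have hone : (1 : MvPolynomial (Fin 2) k) ∈ M := by
        have heq : (C a : MvPolynomial (Fin 2) k) * C a⁻¹ = 1 := by
          rw [← C_mul, mul_inv_cancel₀ ha, C_1]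
        rw [← heq]
        exact Ideal.mul_mem_right _ _ hCaM
      exact hMmax.ne_top ((Ideal.eq_top_iff_one _).mpr hone)
  · rintro ⟨f, hf⟩ hmem
    exact hMle (Submodule.mem_sup_right hmem)

/-- The key existence lemma: every prime of `R` containing `I ∩ R` is the
contraction of a prime of `k[x,y]` containing `I`. -/
lemma Rxy.exists_contraction (I : Ideal (MvPolynomial (Fin 2) k))
    (p : PrimeSpectrum (Rxy k))
    (hle : I.comap (Rxy k).val.toRingHom ≤ p.asIdeal) :
    ∃ q : PrimeSpectrum (MvPolynomial (Fin 2) k),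
      I ≤ q.asIdeal ∧ q.asIdeal.comap (Rxy k).val.toRingHom = p.asIdeal := by
  by_cases hx : Rxy.x ∈ p.asIdeal
  · exact Rxy.case_x_mem I p hle hx
  · exact Rxy.case_x_notmem I p hle hx

end aux

/-- The morphism `Spec k[x,y] → Spec R` induced by the inclusion `R ⊆ k[x,y]` is
surjective and closed. -/
theorem stmt_5 (k : Type*) [Field k] :
    Function.Surjective (PrimeSpectrum.comap (Rxy k).val.toRingHom) ∧
    IsClosedMap (PrimeSpectrum.comap (Rxy k).val.toRingHom) := by
  constructor
  · intro p
    obtain ⟨q, -, hq⟩ := Rxy.exists_contraction ⊥ p (by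
      intro r hr
      have : (Rxy k).val.toRingHom r = 0 := hr
      have hr0 : r = 0 := Subtype.ext this
      simp [hr0])
    exact ⟨q, PrimeSpectrum.ext (by rw [PrimeSpectrum.comap_asIdeal, hq])⟩
  · intro C hC
    obtain ⟨I, rfl⟩ := (PrimeSpectrum.isClosed_iff_zeroLocus_ideal C).mp hC
    have himg : PrimeSpectrum.comap (Rxy k).val.toRingHom '' PrimeSpectrum.zeroLocus (I : Set _) =
        PrimeSpectrum.zeroLocus ((I.comap (Rxy k).val.toRingHom : Ideal (Rxy k)) : Set (Rxy k)) := by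
      apply Set.Subset.antisymm
      · rintro _ ⟨q, hq, rfl⟩
        intro r hr
        have : (Rxy k).val.toRingHom r ∈ q.asIdeal := hq hr
        simpa [PrimeSpectrum.comap_asIdeal] using this
      · intro p hp
        obtain ⟨q, hIq, hq⟩ := Rxy.exists_contraction I p hp
        exact ⟨q, hIq, PrimeSpectrum.ext (by rw [PrimeSpectrum.comap_asIdeal, hq])⟩
    rw [himg]
    exact PrimeSpectrum.isClosed_zeroLocus _
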